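/- Let φ_1, …, φ_n : ℝ → ℝ be differentiable strictly convex functions and let û minimize Φ(u) = Σ_i φ_i(u_i) over {u₁ ≤ ⋯ ≤ u_n}. Let B = {p, p+1, …, q} be a maximal block of indices on which û is constant, with common value w. Then: (i) Σ_{r∈B} φ_r'(w) = 0, and w is the unique solution of Σ_{r∈B} φ_r'(t) = 0; (ii) for every head-subset S = {p, p+1, …, s} with s ≤ q, Σ_{r∈S} φ_r'(w) ≤ 0. -/

import Mathlib

/-!
Lowering a head `{p, …, s}` of the block by a small `ε > 0` keeps `û` isotone, because `û` jumps
up strictly when entering the block at `p`; since `û` minimizes `Φ`, the one-sided derivative of `Φ`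
in that direction, `-∑_{r=p}^{s} φ_r'(w)`, is nonnegative. Symmetrically, the strict jump when
leaving the block at `q` allows raising the whole block, which gives `∑_{r ∈ B} φ_r'(w) ≥ 0`.
With the head inequality for `s = q` this is the block equation, and its root is unique because a
sum of strictly increasing functions is strictly increasing.
-/

open Set Filter Topology

lemma nonneg_of_hasDerivAt_of_forall_le {g : ℝ → ℝ} {g' δ : ℝ} (hg : HasDerivAt g g' 0)
    (hδ : 0 < δ) (hle : ∀ ε ∈ Ioo 0 δ, g 0 ≤ g ε) : 0 ≤ g' := by
  have hslope : ∀ᶠ ε in 𝓝[>] (0 : ℝ), 0 ≤ slope g 0 ε := by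
    filter_upwards [Ioo_mem_nhdsGT hδ] with ε hε
    rw [slope_def_field, sub_zero]
    exact div_nonneg (sub_nonneg.2 (hle ε hε)) hε.1.le
  exact ge_of_tendsto (hg.tendsto_slope.mono_left (nhdsGT_le_nhdsNE 0)) hslope

section SeparableObjective

variable {ι : Type*} {s : Finset ι} {φ : ι → ℝ → ℝ} {φ' u c : ι → ℝ}

lemma hasDerivAt_sum_comp_add_mul (hφ : ∀ i ∈ s, HasDerivAt (φ i) (φ' i) (u i)) :
    HasDerivAt (fun ε : ℝ => ∑ i ∈ s, φ i (u i + ε * c i)) (∑ i ∈ s, φ' i * c i) 0 := by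
  refine HasDerivAt.fun_sum fun i hi => ?_
  have hline : HasDerivAt (fun ε : ℝ => u i + ε * c i) (c i) 0 := by
    simpa using ((hasDerivAt_id (0 : ℝ)).mul_const (c i)).const_add (u i)
  simpa [Function.comp_def, mul_comm] using (hφ i hi).scomp_of_eq 0 hline (by simp)

lemma IsMinOn.sum_deriv_mul_nonneg {K : Set (ι → ℝ)} {δ : ℝ}
    (hmin : IsMinOn (fun v : ι → ℝ => ∑ i ∈ s, φ i (v i)) K u)
    (hφ : ∀ i ∈ s, HasDerivAt (φ i) (φ' i) (u i)) (hδ : 0 < δ)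
    (hK : ∀ ε ∈ Ioo 0 δ, u + ε • c ∈ K) : 0 ≤ ∑ i ∈ s, φ' i * c i :=
  nonneg_of_hasDerivAt_of_forall_le (hasDerivAt_sum_comp_add_mul hφ) hδ fun ε hε => by
    simpa using hmin (hK ε hε)

end SeparableObjective

lemma Finset.sum_mul_indicator_one {ι : Type*} {s t : Finset ι} (f : ι → ℝ) (h : t ⊆ s) :
    ∑ i ∈ s, f i * (t : Set ι).indicator 1 i = ∑ i ∈ t, f i := by
  refine (Finset.sum_congr rfl fun i _ => ?_).trans (Finset.sum_indicator_subset f h)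
  by_cases hi : i ∈ (t : Set ι) <;> simp [hi]

section IntervalShift

variable {ι : Type*} [LinearOrder ι] {s : Set ι} {u : ι → ℝ} {a b : ι} {δ ε : ℝ}

lemma MonotoneOn.sub_smul_indicator_Icc (hu : MonotoneOn u s)
    (hgap : ∀ i ∈ s, ∀ j ∈ s, i < a → a ≤ j → u i + δ ≤ u j) (hε₀ : 0 ≤ ε) (hεδ : ε ≤ δ) :
    MonotoneOn (u - ε • (Icc a b).indicator 1) s := by
  intro i hi j hj hij
  have huij := hu hi hj hij
  simp only [Pi.sub_apply, Pi.smul_apply, smul_eq_mul, indicator_apply, Pi.one_apply]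
  split_ifs with hi' hj' hj'
  · linarith
  · linarith
  · have hia : i < a := lt_of_not_ge fun h => hi' ⟨h, hij.trans hj'.2⟩
    linarith [hgap i hi j hj hia hj'.1]
  · linarith

lemma MonotoneOn.add_smul_indicator_Icc (hu : MonotoneOn u s)
    (hgap : ∀ i ∈ s, ∀ j ∈ s, i ≤ b → b < j → u i + δ ≤ u j) (hε₀ : 0 ≤ ε) (hεδ : ε ≤ δ) :
    MonotoneOn (u + ε • (Icc a b).indicator 1) s := by
  intro i hi j hj hij
  have huij := hu hi hj hij
  simp only [Pi.add_apply, Pi.smul_apply, smul_eq_mul, indicator_apply, Pi.one_apply]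
  split_ifs with hi' hj' hj'
  · linarith
  · have hbj : b < j := lt_of_not_ge fun h => hj' ⟨hi'.1.trans hij, h⟩
    linarith [hgap i hi j hj hi'.2 hbj]
  · linarith
  · linarith

end IntervalShift

section Gaps

variable {u : ℕ → ℝ} {n p q : ℕ}

lemma MonotoneOn.exists_gap_left (hu : MonotoneOn u (Icc 1 n)) (h : p = 1 ∨ u (p - 1) < u p) :
    ∃ δ > 0, ∀ i ∈ Icc 1 n, ∀ j ∈ Icc 1 n, i < p → p ≤ j → u i + δ ≤ u j := by
  rcases h with rfl | h
  · exact ⟨1, one_pos, fun i ⟨hi, _⟩ _ _ hip _ => absurd hi (by omega)⟩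
  refine ⟨u p - u (p - 1), sub_pos.2 h, fun i ⟨hi1, hin⟩ j ⟨hj1, hjn⟩ hip hpj => ?_⟩
  have hleft : u i ≤ u (p - 1) := hu ⟨hi1, hin⟩ ⟨by omega, by omega⟩ (by omega)
  have hright : u p ≤ u j := hu ⟨by omega, by omega⟩ ⟨hj1, hjn⟩ hpj
  linarith

lemma MonotoneOn.exists_gap_right (hu : MonotoneOn u (Icc 1 n)) (h : q = n ∨ u q < u (q + 1)) :
    ∃ δ > 0, ∀ i ∈ Icc 1 n, ∀ j ∈ Icc 1 n, i ≤ q → q < j → u i + δ ≤ u j := by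
  rcases h with rfl | h
  · exact ⟨1, one_pos, fun _ _ j ⟨_, hj⟩ _ hqj => absurd hj (by omega)⟩
  refine ⟨u (q + 1) - u q, sub_pos.2 h, fun i ⟨hi1, hin⟩ j ⟨hj1, hjn⟩ hiq hqj => ?_⟩
  have hleft : u i ≤ u q := hu ⟨hi1, hin⟩ ⟨by omega, by omega⟩ hiq
  have hright : u (q + 1) ≤ u j := hu ⟨by omega, by omega⟩ ⟨hj1, hjn⟩ hqj
  linarith

end Gaps

lemma StrictConvexOn.strictMono_of_hasDerivAt {f f' : ℝ → ℝ} (hf : StrictConvexOn ℝ univ f)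
    (hd : ∀ x, HasDerivAt f (f' x) x) : StrictMono f' := by
  have h := hf.strictMonoOn_deriv fun x _ => (hd x).differentiableAt
  rwa [show deriv f = f' from funext fun x => (hd x).deriv, strictMonoOn_univ] at h

lemma Finset.strictMono_sum_of_nonempty {ι : Type*} {s : Finset ι} {f : ι → ℝ → ℝ}
    (hs : s.Nonempty) (hf : ∀ i ∈ s, StrictMono (f i)) : StrictMono fun t => ∑ i ∈ s, f i t :=
  fun _ _ hxy => Finset.sum_lt_sum_of_nonempty hs fun i hi => hf i hi hxy

lemma monotoneOn_Icc_iff_forall_finset {ι : Type*} [Preorder ι] [LocallyFiniteOrder ι]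
    {a b : ι} {v : ι → ℝ} :
    MonotoneOn v (Icc a b) ↔ ∀ i j, i ∈ Finset.Icc a b → j ∈ Finset.Icc a b → i ≤ j → v i ≤ v j :=
  ⟨fun h _ _ hi hj => h (Finset.mem_Icc.1 hi) (Finset.mem_Icc.1 hj),
    fun h i hi j hj => h i j (Finset.mem_Icc.2 hi) (Finset.mem_Icc.2 hj)⟩

/-- Block characterization of the isotonic minimizer: on a maximal block of constancy
the sum of the derivatives vanishes (and the block value is the unique root), and the
head-subset sums are nonpositive. -/
theorem isotonic_block_characterization (n : ℕ) (φ φ' : ℕ → ℝ → ℝ)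
    (hconv : ∀ i ∈ Finset.Icc 1 n, StrictConvexOn ℝ Set.univ (φ i))
    (hderiv : ∀ i ∈ Finset.Icc 1 n, ∀ x : ℝ, HasDerivAt (φ i) (φ' i x) x)
    (uhat : ℕ → ℝ)
    (hmono : ∀ i j, i ∈ Finset.Icc 1 n → j ∈ Finset.Icc 1 n → i ≤ j → uhat i ≤ uhat j)
    (hmin : IsMinOn (fun u : ℕ → ℝ => ∑ i ∈ Finset.Icc 1 n, φ i (u i))
        {u : ℕ → ℝ | ∀ i j, i ∈ Finset.Icc 1 n → j ∈ Finset.Icc 1 n → i ≤ j → u i ≤ u j} uhat)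
    (p q : ℕ) (w : ℝ) (hp : 1 ≤ p) (hpq : p ≤ q) (hq : q ≤ n)
    (hblock : ∀ r ∈ Finset.Icc p q, uhat r = w)
    (hmaxl : p = 1 ∨ uhat (p - 1) < w)
    (hmaxr : q = n ∨ w < uhat (q + 1)) :
    (∑ r ∈ Finset.Icc p q, φ' r w = 0) ∧
    (∀ t : ℝ, ∑ r ∈ Finset.Icc p q, φ' r t = 0 → t = w) ∧
    (∀ s ∈ Finset.Icc p q, ∑ r ∈ Finset.Icc p s, φ' r w ≤ 0) := by
  have hB : Finset.Icc p q ⊆ Finset.Icc 1 n := Finset.Icc_subset_Icc hp hq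
  have hu : MonotoneOn uhat (Icc 1 n) := monotoneOn_Icc_iff_forall_finset.2 hmono
  have hφ : ∀ i ∈ Finset.Icc 1 n, HasDerivAt (φ i) (φ' i (uhat i)) (uhat i) :=
    fun i hi => hderiv i hi _
  have hdir : ∀ s ≤ q, ∑ i ∈ Finset.Icc 1 n, φ' i (uhat i) * (Finset.Icc p s : Set ℕ).indicator 1 i
      = ∑ r ∈ Finset.Icc p s, φ' r w := fun s hs => by
    rw [Finset.sum_mul_indicator_one _ ((Finset.Icc_subset_Icc_right hs).trans hB)]
    exact Finset.sum_congr rfl fun r hr => by rw [hblock r (Finset.Icc_subset_Icc_right hs hr)]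
  have head : ∀ s ∈ Finset.Icc p q, ∑ r ∈ Finset.Icc p s, φ' r w ≤ 0 := by
    intro s hs
    obtain ⟨δ, hδ, hgap⟩ := hu.exists_gap_left (by rwa [hblock p (Finset.left_mem_Icc.2 hpq)])
    have hfoc := hmin.sum_deriv_mul_nonneg (c := -(Finset.Icc p s : Set ℕ).indicator 1) hφ hδ
      fun ε hε => monotoneOn_Icc_iff_forall_finset.1 <| by
        rw [smul_neg, ← sub_eq_add_neg, Finset.coe_Icc]
        exact hu.sub_smul_indicator_Icc hgap hε.1.le hε.2.le
    simp only [Pi.neg_apply, mul_neg, Finset.sum_neg_distrib, hdir s (Finset.mem_Icc.1 hs).2] at hfoc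
    linarith
  have full : 0 ≤ ∑ r ∈ Finset.Icc p q, φ' r w := by
    obtain ⟨δ, hδ, hgap⟩ := hu.exists_gap_right (by rwa [hblock q (Finset.right_mem_Icc.2 hpq)])
    refine hdir q le_rfl ▸ hmin.sum_deriv_mul_nonneg hφ hδ fun ε hε => monotoneOn_Icc_iff_forall_finset.1 ?_
    rw [Finset.coe_Icc]
    exact hu.add_smul_indicator_Icc hgap hε.1.le hε.2.le
  have hzero := le_antisymm (head q (Finset.right_mem_Icc.2 hpq)) full
  have hstrict : StrictMono fun t => ∑ r ∈ Finset.Icc p q, φ' r t :=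
    Finset.strictMono_sum_of_nonempty (Finset.nonempty_Icc.2 hpq) fun r hr =>
      (hconv r (hB hr)).strictMono_of_hasDerivAt (hderiv r (hB hr))
  exact ⟨hzero, fun t ht => hstrict.injective (ht.trans hzero.symm), head⟩
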